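/- Let W₁, W₂ be linearly independent 2×2 complex matrices with W₁ invertible. Then the two-dimensional matrix pencil span{W₁, W₂} ⊆ M₂(ℂ) contains two linearly independent singular matrices (matrices of determinant zero) if and only if the matrix W₁⁻¹W₂ has two distinct eigenvalues. -/

import Mathlib

lemma eig_iff_det_aux (M : Matrix (Fin 2) (Fin 2) ℂ) (μ : ℂ) :
    Module.End.HasEigenvalue (Matrix.toLin' M) μ ↔ (M - μ • 1).det = 0 := by
  rw [← Matrix.exists_mulVec_eq_zero_iff, Module.End.hasEigenvalue_iff, Submodule.ne_bot_iff]
  constructor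
  · rintro ⟨v, hv, hv0⟩
    rw [Module.End.mem_eigenspace_iff, Matrix.toLin'_apply] at hv
    exact ⟨v, hv0, by simp [Matrix.sub_mulVec, Matrix.smul_mulVec, hv]⟩
  · rintro ⟨v, hv0, hv⟩
    refine ⟨v, ?_, hv0⟩
    rw [Module.End.mem_eigenspace_iff, Matrix.toLin'_apply]
    rw [Matrix.sub_mulVec, Matrix.smul_mulVec, Matrix.one_mulVec, sub_eq_zero] at hv
    exact hv

theorem pencil_two_singular_iff_distinct_eigenvalues
    (W₁ W₂ : Matrix (Fin 2) (Fin 2) ℂ)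
    (hli : LinearIndependent ℂ ![W₁, W₂]) (hW₁ : IsUnit W₁) :
    (∃ A B : Matrix (Fin 2) (Fin 2) ℂ,
        A ∈ Submodule.span ℂ {W₁, W₂} ∧ B ∈ Submodule.span ℂ {W₁, W₂} ∧
        A.det = 0 ∧ B.det = 0 ∧ LinearIndependent ℂ ![A, B]) ↔
    (∃ μ₁ μ₂ : ℂ, μ₁ ≠ μ₂ ∧
        Module.End.HasEigenvalue (Matrix.toLin' (W₁⁻¹ * W₂)) μ₁ ∧
        Module.End.HasEigenvalue (Matrix.toLin' (W₁⁻¹ * W₂)) μ₂) := by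
  set M : Matrix (Fin 2) (Fin 2) ℂ := W₁⁻¹ * W₂ with hM
  have hdet : IsUnit W₁.det := (Matrix.isUnit_iff_isUnit_det W₁).mp hW₁
  have hdet0 : W₁.det ≠ 0 := hdet.ne_zero
  have hW₁M : W₁ * M = W₂ := by
    rw [hM, ← mul_assoc, Matrix.mul_nonsing_inv _ hdet, one_mul]
  -- key decomposition: a•W₁ + b•W₂ = W₁ * (a•1 + b•M)
  have hdecomp : ∀ a b : ℂ, a • W₁ + b • W₂ = W₁ * (a • 1 + b • M) := by
    intro a b
    rw [mul_add, Matrix.mul_smul, Matrix.mul_smul, mul_one, hW₁M]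
  -- a singular nonzero pencil element yields an eigenvalue
  have key : ∀ a b : ℂ, (a • W₁ + b • W₂).det = 0 → (a, b) ≠ 0 →
      b ≠ 0 ∧ Module.End.HasEigenvalue (Matrix.toLin' M) (-a / b) := by
    intro a b hsing hne
    rw [hdecomp, Matrix.det_mul, mul_eq_zero] at hsing
    have hsing' : (a • 1 + b • M).det = 0 := hsing.resolve_left hdet0
    have hb : b ≠ 0 := by
      rintro rfl
      simp only [zero_smul, add_zero, Matrix.det_smul, Matrix.det_one, mul_one] at hsing'
      have ha : a = 0 := by
        have := pow_eq_zero_iff (n := Fintype.card (Fin 2)) (by simp) |>.mp hsing'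
        exact this
      exact hne (by simp [ha])
    refine ⟨hb, (eig_iff_det_aux M (-a / b)).mpr ?_⟩
    have hexp : M - (-a / b) • 1 = b⁻¹ • (a • 1 + b • M) := by
      match_scalars <;> field_simp
    rw [hexp, Matrix.det_smul, hsing', mul_zero]
  constructor
  · rintro ⟨A, B, hA, hB, hAdet, hBdet, hABli⟩
    obtain ⟨a₁, b₁, hA'⟩ := Submodule.mem_span_pair.mp hA
    obtain ⟨a₂, b₂, hB'⟩ := Submodule.mem_span_pair.mp hB
    have hAne : A ≠ 0 := hABli.ne_zero 0
    have hBne : B ≠ 0 := hABli.ne_zero 1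
    obtain ⟨hb₁, heig₁⟩ := key a₁ b₁ (hA' ▸ hAdet)
      (by rintro h; apply hAne; rw [← hA']; simp [Prod.ext_iff] at h; simp [h.1, h.2])
    obtain ⟨hb₂, heig₂⟩ := key a₂ b₂ (hB' ▸ hBdet)
      (by rintro h; apply hBne; rw [← hB']; simp [Prod.ext_iff] at h; simp [h.1, h.2])
    refine ⟨-a₁ / b₁, -a₂ / b₂, ?_, heig₁, heig₂⟩
    intro heq
    have hab : a₁ * b₂ = a₂ * b₁ := by
      field_simp at heq
      linear_combination -heq
    have hcomb : b₂ • A + (-b₁) • B = 0 := by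
      rw [← hA', ← hB']
      linear_combination (norm := module) hab • W₁
    exact hb₂ ((LinearIndependent.pair_iff.mp hABli b₂ (-b₁) hcomb).1)
  · rintro ⟨μ₁, μ₂, hne, heig₁, heig₂⟩
    refine ⟨W₂ - μ₁ • W₁, W₂ - μ₂ • W₁, ?_, ?_, ?_, ?_, ?_⟩
    · exact Submodule.mem_span_pair.mpr ⟨-μ₁, 1, by rw [neg_smul, one_smul]; abel⟩
    · exact Submodule.mem_span_pair.mpr ⟨-μ₂, 1, by rw [neg_smul, one_smul]; abel⟩
    · have : W₂ - μ₁ • W₁ = W₁ * (M - μ₁ • 1) := by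
        rw [mul_sub, hW₁M, Matrix.mul_smul, mul_one]
      rw [this, Matrix.det_mul, (eig_iff_det_aux M μ₁).mp heig₁, mul_zero]
    · have : W₂ - μ₂ • W₁ = W₁ * (M - μ₂ • 1) := by
        rw [mul_sub, hW₁M, Matrix.mul_smul, mul_one]
      rw [this, Matrix.det_mul, (eig_iff_det_aux M μ₂).mp heig₂, mul_zero]
    · rw [LinearIndependent.pair_iff]
      intro s t hst
      have hexp : (-(s * μ₁) - t * μ₂) • W₁ + (s + t) • W₂ = 0 := by
        rw [← hst]; module
      obtain ⟨h1, h2⟩ := LinearIndependent.pair_iff.mp hli _ _ hexp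
      have hs : s = 0 := by
        have : s * (μ₁ - μ₂) = 0 := by linear_combination -h1 - μ₂ * h2
        rcases mul_eq_zero.mp this with h | h
        · exact h
        · exact absurd (sub_eq_zero.mp h) hne
      constructor
      · exact hs
      · linear_combination h2 - hs
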